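/- Let G be a connected cubic graph and let G' be obtained by subdividing every edge of G exactly four times. Let N be the set of new vertices at distance 1 from an original vertex (the intermediate-close vertices). Then N is an independent set in G', and one can add, for each original vertex u, one edge between two of its three intermediate-close neighbours, obtaining a graph G'+F of maximum degree at most 3 that is K_{1,3}-free and diamond-free. -/
import Mathlib


open SimpleGraph

def ClawFree {V : Type*} (G : SimpleGraph V) : Prop :=
  ¬∃ z a b c : V, G.Adj z a ∧ G.Adj z b ∧ G.Adj z c ∧
    ¬G.Adj a b ∧ ¬G.Adj a c ∧ ¬G.Adj b c ∧ a ≠ b ∧ a ≠ c ∧ b ≠ c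

/-- `G` has no induced diamond (`K₄` minus the edge `cd`). -/
def DiamondFree {V : Type*} (G : SimpleGraph V) : Prop :=
  ¬∃ a b c d : V, G.Adj a b ∧ G.Adj a c ∧ G.Adj a d ∧ G.Adj b c ∧ G.Adj b d ∧
    ¬G.Adj c d ∧ c ≠ d

/-- Indexing of the internal vertices of a 4-subdivision: a pair `(a, e)` with `a` an
endpoint of the edge `e`.  Each edge `e = uv` of `G` is subdivided into the path
`u, y¹_{u,e}, y²_{u,e}, y²_{v,e}, y¹_{v,e}, v`; the pair `(a,e)` with flag `false`
denotes the intermediate-close vertex `y¹_{a,e}` and with flag `true` the middle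
vertex `y²_{a,e}`. -/
def HalfEdge {V : Type*} (G : SimpleGraph V) := {p : V × Sym2 V // p.2 ∈ G.edgeSet ∧ p.1 ∈ p.2}

/-- The 4-subdivision of `G`: every edge is subdivided exactly four times. -/
def Subdivision4 {V : Type*} (G : SimpleGraph V) :
    SimpleGraph (V ⊕ (Bool × HalfEdge G)) :=
  SimpleGraph.fromRel (fun a b =>
    match a, b with
    | Sum.inl x, Sum.inr (false, p) => x = p.1.1
    | Sum.inr (false, p), Sum.inr (true, q) => p.1 = q.1
    | Sum.inr (true, p), Sum.inr (true, q) => p.1.2 = q.1.2 ∧ p.1.1 ≠ q.1.1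
    | _, _ => False)

section Aux

variable {V : Type*} {G : SimpleGraph V}

lemma adj_ll {x y : V} : (Subdivision4 G).Adj (Sum.inl x) (Sum.inl y) ↔ False := by
  simp [Subdivision4, SimpleGraph.fromRel_adj]

lemma adj_lf {x : V} {p : HalfEdge G} :
    (Subdivision4 G).Adj (Sum.inl x) (Sum.inr (false, p)) ↔ p.1.1 = x := by
  simp [Subdivision4, SimpleGraph.fromRel_adj, eq_comm]

lemma adj_lt {x : V} {p : HalfEdge G} :
    (Subdivision4 G).Adj (Sum.inl x) (Sum.inr (true, p)) ↔ False := by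
  simp [Subdivision4, SimpleGraph.fromRel_adj]

lemma adj_ff {p q : HalfEdge G} :
    (Subdivision4 G).Adj (Sum.inr (false, p)) (Sum.inr (false, q)) ↔ False := by
  simp [Subdivision4, SimpleGraph.fromRel_adj]

lemma adj_ft {p q : HalfEdge G} :
    (Subdivision4 G).Adj (Sum.inr (false, p)) (Sum.inr (true, q)) ↔ p = q := by
  simp [Subdivision4, SimpleGraph.fromRel_adj]; exact Subtype.coe_inj

lemma adj_tt {p q : HalfEdge G} :
    (Subdivision4 G).Adj (Sum.inr (true, p)) (Sum.inr (true, q)) ↔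
      p.1.2 = q.1.2 ∧ p.1.1 ≠ q.1.1 := by
  constructor
  · rintro ⟨hne, h | h⟩
    · exact h
    · exact ⟨h.1.symm, h.2.symm⟩
  · intro h
    refine ⟨?_, Or.inl h⟩
    rintro heq
    apply h.2
    have : p = q := by simpa using heq
    rw [this]

lemma partner_unique {p q q' : HalfEdge G} (h1 : q.1.2 = p.1.2) (h2 : q.1.1 ≠ p.1.1)
    (h3 : q'.1.2 = p.1.2) (h4 : q'.1.1 ≠ p.1.1) : q = q' := by
  have hpmem : p.1.1 ∈ p.1.2 := p.2.2
  have hqmem : q.1.1 ∈ p.1.2 := h1 ▸ q.2.2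
  have hq'mem : q'.1.1 ∈ p.1.2 := h3 ▸ q'.2.2
  have e1 : p.1.2 = s(p.1.1, q.1.1) := (Sym2.mem_and_mem_iff (Ne.symm h2)).mp ⟨hpmem, hqmem⟩
  have e2 : p.1.2 = s(p.1.1, q'.1.1) := (Sym2.mem_and_mem_iff (Ne.symm h4)).mp ⟨hpmem, hq'mem⟩
  have hfst : q.1.1 = q'.1.1 := by
    rcases Sym2.eq_iff.mp (e1.symm.trans e2) with ⟨_, h⟩ | ⟨h, h'⟩
    · exact h
    · exact absurd h' h2
  refine Subtype.ext (Prod.ext hfst (h1.trans h3.symm))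

lemma exists_partner (p : HalfEdge G) : ∃ q : HalfEdge G, q.1.2 = p.1.2 ∧ q.1.1 ≠ p.1.1 := by
  obtain ⟨y, hy⟩ := Sym2.mem_iff_exists.mp p.2.2
  have hadj : G.Adj p.1.1 y := by
    have h := p.2.1
    rw [hy] at h
    exact h
  exact ⟨⟨(y, p.1.2), p.2.1, by rw [hy]; exact Sym2.mem_mk_right _ _⟩, rfl, hadj.ne'⟩

lemma finite_of_ncard_eq_three {α : Type*} {s : Set α} (h : s.ncard = 3) : s.Finite := by
  by_contra hinf
  have : s.ncard = 0 := Set.Infinite.ncard hinf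
  omega

lemma sx_ncard {x : V} (h3 : {u | G.Adj x u}.ncard = 3) :
    ({p : HalfEdge G | p.1.1 = x}).ncard = 3 := by
  classical
  have hne : {u | G.Adj x u}.Nonempty := Set.nonempty_of_ncard_ne_zero (by omega)
  obtain ⟨u0, hu0⟩ := hne
  set f : V → HalfEdge G := fun u =>
    if h : G.Adj x u then ⟨(x, s(x, u)), (SimpleGraph.mem_edgeSet _).mpr h, Sym2.mem_mk_left x u⟩
    else ⟨(x, s(x, u0)), (SimpleGraph.mem_edgeSet _).mpr hu0, Sym2.mem_mk_left x u0⟩ with hf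
  have himg : {p : HalfEdge G | p.1.1 = x} = f '' {u | G.Adj x u} := by
    ext p
    constructor
    · intro hp
      obtain ⟨y, hy⟩ := Sym2.mem_iff_exists.mp p.2.2
      have hadj : G.Adj x y := by
        have h := p.2.1
        rw [hy, hp] at h
        exact h
      refine ⟨y, hadj, ?_⟩
      have hfy : f y = ⟨(x, s(x, y)), (SimpleGraph.mem_edgeSet _).mpr hadj, Sym2.mem_mk_left x y⟩ := by
        rw [hf]; exact dif_pos hadj
      rw [hfy]
      refine Subtype.ext (Prod.ext hp.symm ?_)
      rw [hy, hp]
    · rintro ⟨u, hu, rfl⟩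
      have hfu : f u = ⟨(x, s(x, u)), (SimpleGraph.mem_edgeSet _).mpr hu, Sym2.mem_mk_left x u⟩ := by
        rw [hf]; exact dif_pos hu
      rw [hfu]
      rfl
  have hinj : Set.InjOn f {u | G.Adj x u} := by
    intro u hu u' hu' heq
    have h1 : f u = ⟨(x, s(x, u)), (SimpleGraph.mem_edgeSet _).mpr hu, Sym2.mem_mk_left x u⟩ := by
      rw [hf]; exact dif_pos hu
    have h2 : f u' = ⟨(x, s(x, u')), (SimpleGraph.mem_edgeSet _).mpr hu', Sym2.mem_mk_left x u'⟩ := by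
      rw [hf]; exact dif_pos hu'
    rw [h1, h2] at heq
    have := Subtype.ext_iff.mp heq
    have hs : s(x, u) = s(x, u') := congrArg Prod.snd this
    rcases Sym2.eq_iff.mp hs with ⟨_, h⟩ | ⟨h, h'⟩
    · exact h
    · exfalso
      exact (hu' : G.Adj x u').ne h
  rw [himg, Set.ncard_image_of_injOn hinj, h3]

lemma ncard_le_three_of_subset_triple {α : Type*} {s : Set α} {a b c : α}
    (h : s ⊆ {a, b, c}) : s.ncard ≤ 3 := by
  have hfin : ({a, b, c} : Set α).Finite :=
    ((Set.finite_singleton c).insert b).insert a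
  have h1 := Set.ncard_le_ncard h hfin
  have h2 := Set.ncard_insert_le a ({b, c} : Set α)
  have h3 := Set.ncard_insert_le b ({c} : Set α)
  have h4 : ({c} : Set α).ncard = 1 := Set.ncard_singleton c
  omega

end Aux

theorem stmt17 {V : Type*} [Fintype V] (G : SimpleGraph V) (hG : G.Connected)
    (hcubic : ∀ v : V, {u | G.Adj v u}.ncard = 3) :
    -- the set of intermediate-close vertices is independent in the subdivision
    (∀ p q : HalfEdge G,
      ¬(Subdivision4 G).Adj (Sum.inr (false, p)) (Sum.inr (false, q))) ∧
    -- and one can add, for each original vertex, exactly one edge between two of its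
    -- three intermediate-close neighbours so that the resulting graph is subcubic,
    -- claw-free and diamond-free
    ∃ F : SimpleGraph (V ⊕ (Bool × HalfEdge G)),
      (∀ a b, F.Adj a b → ∃ p q : HalfEdge G, a = Sum.inr (false, p) ∧
        b = Sum.inr (false, q) ∧ p.1.1 = q.1.1 ∧ p ≠ q) ∧
      (∀ u : V, ∃ p q : HalfEdge G, p.1.1 = u ∧ q.1.1 = u ∧ p ≠ q ∧
        F.Adj (Sum.inr (false, p)) (Sum.inr (false, q)) ∧
        ∀ p' q' : HalfEdge G, p'.1.1 = u → q'.1.1 = u →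
          F.Adj (Sum.inr (false, p')) (Sum.inr (false, q')) →
          (p' = p ∧ q' = q) ∨ (p' = q ∧ q' = p)) ∧
      (∀ w, {x | (Subdivision4 G ⊔ F).Adj w x}.ncard ≤ 3) ∧
      ClawFree (Subdivision4 G ⊔ F) ∧ DiamondFree (Subdivision4 G ⊔ F) := by
  classical
  constructor
  · exact fun p q h => (adj_ff.mp h).elim
  -- choose, for every vertex, two distinct incident half-edges
  have hScard : ∀ x : V, ({p : HalfEdge G | p.1.1 = x}).ncard = 3 := fun x => sx_ncard (hcubic x)
  have hSfin : ∀ x : V, ({p : HalfEdge G | p.1.1 = x}).Finite :=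
    fun x => finite_of_ncard_eq_three (hScard x)
  have hex : ∀ u : V, ∃ pq : HalfEdge G × HalfEdge G,
      pq.1.1.1 = u ∧ pq.2.1.1 = u ∧ pq.1 ≠ pq.2 := by
    intro u
    have h1 : 1 < ({p : HalfEdge G | p.1.1 = u}).ncard := by rw [hScard]; omega
    obtain ⟨p, hp, q, hq, hne⟩ := (Set.one_lt_ncard (hSfin u)).mp h1
    exact ⟨(p, q), hp, hq, hne⟩
  choose P hP using hex
  have hP1 : ∀ u, (P u).1.1.1 = u := fun u => (hP u).1
  have hP2 : ∀ u, (P u).2.1.1 = u := fun u => (hP u).2.1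
  have hP3 : ∀ u, (P u).1 ≠ (P u).2 := fun u => (hP u).2.2
  set F : SimpleGraph (V ⊕ (Bool × HalfEdge G)) := SimpleGraph.fromRel (fun a b =>
    ∃ u : V, a = Sum.inr (false, (P u).1) ∧ b = Sum.inr (false, (P u).2)) with hFdef
  have hFshape : ∀ a b, F.Adj a b → ∃ p q : HalfEdge G, a = Sum.inr (false, p) ∧
      b = Sum.inr (false, q) ∧ p.1.1 = q.1.1 ∧ p ≠ q := by
    rintro a b ⟨hne, ⟨u, h1, h2⟩ | ⟨u, h1, h2⟩⟩
    · exact ⟨(P u).1, (P u).2, h1, h2, (hP1 u).trans (hP2 u).symm, hP3 u⟩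
    · exact ⟨(P u).2, (P u).1, h2, h1, (hP2 u).trans (hP1 u).symm, (hP3 u).symm⟩
  have hFfull : ∀ p q : HalfEdge G,
      F.Adj (Sum.inr (false, p)) (Sum.inr (false, q)) ↔
        (p = (P p.1.1).1 ∧ q = (P p.1.1).2) ∨ (p = (P p.1.1).2 ∧ q = (P p.1.1).1) := by
    intro p q
    constructor
    · rintro ⟨hne, ⟨u, h1, h2⟩ | ⟨u, h1, h2⟩⟩
      · have hp : p = (P u).1 := by simpa using h1
        have hq : q = (P u).2 := by simpa using h2
        have hu : p.1.1 = u := by rw [hp]; exact hP1 u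
        subst hu
        exact Or.inl ⟨hp, hq⟩
      · have hq : q = (P u).1 := by simpa using h1
        have hp : p = (P u).2 := by simpa using h2
        have hu : p.1.1 = u := by rw [hp]; exact hP2 u
        subst hu
        exact Or.inr ⟨hp, hq⟩
    · rintro (⟨h1, h2⟩ | ⟨h1, h2⟩)
      · refine ⟨?_, Or.inl ⟨p.1.1, congrArg (fun t => Sum.inr (false, t)) h1, congrArg (fun t => Sum.inr (false, t)) h2⟩⟩
        intro hcon
        have hpq : p = q := by simpa using hcon
        exact hP3 p.1.1 (by rw [← h1, ← h2, hpq])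
      · refine ⟨?_, Or.inr ⟨p.1.1, congrArg (fun t => Sum.inr (false, t)) h2, congrArg (fun t => Sum.inr (false, t)) h1⟩⟩
        intro hcon
        have hpq : p = q := by simpa using hcon
        exact hP3 p.1.1 (by rw [← h1, ← h2, hpq])
  have hFP : ∀ u, F.Adj (Sum.inr (false, (P u).1)) (Sum.inr (false, (P u).2)) := by
    intro u
    refine ⟨?_, Or.inl ⟨u, rfl, rfl⟩⟩
    intro hcon
    exact hP3 u (by simpa using hcon)
  set H : SimpleGraph (V ⊕ (Bool × HalfEdge G)) := Subdivision4 G ⊔ F with hHdef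
  -- neighbourhood characterisations
  have N1 : ∀ (x : V) w, H.Adj (Sum.inl x) w ↔
      ∃ p : HalfEdge G, w = Sum.inr (false, p) ∧ p.1.1 = x := by
    intro x w
    constructor
    · intro hw
      rcases (SimpleGraph.sup_adj _ _ _ _).mp hw with hw | hw
      · obtain y | ⟨b, p⟩ := w
        · exact (adj_ll.mp hw).elim
        · cases b
          · exact ⟨p, rfl, adj_lf.mp hw⟩
          · exact (adj_lt.mp hw).elim
      · obtain ⟨p', q', ha, _, _, _⟩ := hFshape _ _ hw
        exact absurd ha (by simp)
    · rintro ⟨p, rfl, hp⟩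
      exact (SimpleGraph.sup_adj _ _ _ _).mpr (Or.inl (adj_lf.mpr hp))
  have N2 : ∀ (p : HalfEdge G) w, H.Adj (Sum.inr (true, p)) w ↔
      w = Sum.inr (false, p) ∨
      ∃ q : HalfEdge G, w = Sum.inr (true, q) ∧ q.1.2 = p.1.2 ∧ q.1.1 ≠ p.1.1 := by
    intro p w
    constructor
    · intro hw
      rcases (SimpleGraph.sup_adj _ _ _ _).mp hw with hw | hw
      · obtain y | ⟨b, q⟩ := w
        · exact (adj_lt.mp hw.symm).elim
        · cases b
          · have := adj_ft.mp hw.symm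
            exact Or.inl (by rw [this])
          · obtain ⟨h1, h2⟩ := adj_tt.mp hw
            exact Or.inr ⟨q, rfl, h1.symm, h2.symm⟩
      · obtain ⟨p', q', ha, _, _, _⟩ := hFshape _ _ hw
        exact absurd ha (by simp)
    · rintro (rfl | ⟨q, rfl, h1, h2⟩)
      · exact (SimpleGraph.sup_adj _ _ _ _).mpr (Or.inl (adj_ft.mpr rfl).symm)
      · exact (SimpleGraph.sup_adj _ _ _ _).mpr (Or.inl (adj_tt.mpr ⟨h1.symm, h2.symm⟩))
  have N3 : ∀ (p : HalfEdge G) w, H.Adj (Sum.inr (false, p)) w ↔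
      w = Sum.inl p.1.1 ∨ w = Sum.inr (true, p) ∨
      (p = (P p.1.1).1 ∧ w = Sum.inr (false, (P p.1.1).2)) ∨
      (p = (P p.1.1).2 ∧ w = Sum.inr (false, (P p.1.1).1)) := by
    intro p w
    constructor
    · intro hw
      rcases (SimpleGraph.sup_adj _ _ _ _).mp hw with hw | hw
      · obtain y | ⟨b, q⟩ := w
        · have := adj_lf.mp hw.symm
          exact Or.inl (by rw [this])
        · cases b
          · exact (adj_ff.mp hw).elim
          · have := adj_ft.mp hw
            exact Or.inr (Or.inl (by rw [this]))
      · obtain ⟨p', q', ha, hb, _, _⟩ := hFshape _ _ hw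
        have hp' : p' = p := by
          have := ha.symm
          simpa using this
        subst hp'
        subst hb
        rcases (hFfull p' q').mp hw with ⟨h1, h2⟩ | ⟨h1, h2⟩
        · exact Or.inr (Or.inr (Or.inl ⟨h1, by rw [h2]⟩))
        · exact Or.inr (Or.inr (Or.inr ⟨h1, by rw [h2]⟩))
    · rintro (rfl | rfl | ⟨h1, rfl⟩ | ⟨h1, rfl⟩)
      · exact (SimpleGraph.sup_adj _ _ _ _).mpr (Or.inl (adj_lf.mpr rfl).symm)
      · exact (SimpleGraph.sup_adj _ _ _ _).mpr (Or.inl (adj_ft.mpr rfl))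
      · exact (SimpleGraph.sup_adj _ _ _ _).mpr (Or.inr ((hFfull _ _).mpr (Or.inl ⟨h1, rfl⟩)))
      · exact (SimpleGraph.sup_adj _ _ _ _).mpr (Or.inr ((hFfull _ _).mpr (Or.inr ⟨h1, rfl⟩)))
  refine ⟨F, hFshape, ?_, ?_, ?_, ?_⟩
  · -- per-vertex existence and uniqueness of the added edge
    intro u
    refine ⟨(P u).1, (P u).2, hP1 u, hP2 u, hP3 u, hFP u, ?_⟩
    intro p' q' hp' hq' hF
    rcases (hFfull p' q').mp hF with ⟨h1, h2⟩ | ⟨h1, h2⟩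
    · rw [hp'] at h1 h2
      exact Or.inl ⟨h1, h2⟩
    · rw [hp'] at h1 h2
      exact Or.inr ⟨h1, h2⟩
  · -- degree bound
    intro w
    obtain x | ⟨b, p⟩ := w
    · have hsub : {w | H.Adj (Sum.inl x) w} ⊆
          (fun p : HalfEdge G => (Sum.inr (false, p) : V ⊕ (Bool × HalfEdge G))) ''
            {p : HalfEdge G | p.1.1 = x} := by
        intro w hw
        obtain ⟨p, rfl, hp⟩ := (N1 x w).mp hw
        exact ⟨p, hp, rfl⟩
      calc {w | H.Adj (Sum.inl x) w}.ncard
          ≤ _ := Set.ncard_le_ncard hsub ((hSfin x).image _)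
        _ ≤ ({p : HalfEdge G | p.1.1 = x}).ncard := Set.ncard_image_le (hSfin x)
        _ = 3 := hScard x
    · cases b
      · -- intermediate-close vertex
        by_cases h1 : p = (P p.1.1).1
        · refine ncard_le_three_of_subset_triple (a := Sum.inl p.1.1)
            (b := Sum.inr (true, p)) (c := Sum.inr (false, (P p.1.1).2)) ?_
          intro w hw
          rcases (N3 p w).mp hw with rfl | rfl | ⟨_, rfl⟩ | ⟨h2, rfl⟩
          · exact Or.inl rfl
          · exact Or.inr (Or.inl rfl)
          · exact Or.inr (Or.inr rfl)
          · exact absurd (h1.symm.trans h2) (hP3 p.1.1)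
        · by_cases h2 : p = (P p.1.1).2
          · refine ncard_le_three_of_subset_triple (a := Sum.inl p.1.1)
              (b := Sum.inr (true, p)) (c := Sum.inr (false, (P p.1.1).1)) ?_
            intro w hw
            rcases (N3 p w).mp hw with rfl | rfl | ⟨h1', rfl⟩ | ⟨_, rfl⟩
            · exact Or.inl rfl
            · exact Or.inr (Or.inl rfl)
            · exact absurd h1' h1
            · exact Or.inr (Or.inr rfl)
          · refine ncard_le_three_of_subset_triple (a := Sum.inl p.1.1)
              (b := Sum.inr (true, p)) (c := Sum.inr (true, p)) ?_
            intro w hw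
            rcases (N3 p w).mp hw with rfl | rfl | ⟨h1', rfl⟩ | ⟨h2', rfl⟩
            · exact Or.inl rfl
            · exact Or.inr (Or.inl rfl)
            · exact absurd h1' h1
            · exact absurd h2' h2
      · -- middle vertex
        obtain ⟨q0, hq01, hq02⟩ := exists_partner p
        refine ncard_le_three_of_subset_triple (a := Sum.inr (false, p))
          (b := Sum.inr (true, q0)) (c := Sum.inr (true, q0)) ?_
        intro w hw
        rcases (N2 p w).mp hw with rfl | ⟨q, rfl, hh1, hh2⟩
        · exact Or.inl rfl
        · have : q = q0 := partner_unique hh1 hh2 hq01 hq02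
          rw [this]
          exact Or.inr (Or.inl rfl)
  · -- claw-free
    rintro ⟨z, a, b, c, hza, hzb, hzc, hab, hac, hbc, hab', hac', hbc'⟩
    obtain x | ⟨bz, p⟩ := z
    · -- original vertex as centre
      obtain ⟨pa, rfl, hpa⟩ := (N1 x a).mp hza
      obtain ⟨pb, rfl, hpb⟩ := (N1 x b).mp hzb
      obtain ⟨pc, rfl, hpc⟩ := (N1 x c).mp hzc
      have nab : pa ≠ pb := by simpa using hab'
      have nac : pa ≠ pc := by simpa using hac'
      have nbc : pb ≠ pc := by simpa using hbc'
      have hsub : ({pa, pb, pc} : Set (HalfEdge G)) ⊆ {p : HalfEdge G | p.1.1 = x} := by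
        rintro t (rfl | rfl | rfl)
        · exact hpa
        · exact hpb
        · exact hpc
      have hTcard : ({pa, pb, pc} : Set (HalfEdge G)).ncard = 3 := by
        rw [Set.ncard_insert_of_notMem (by simp [nab, nac])
          ((Set.finite_singleton pc).insert pb), Set.ncard_pair nbc]
      have hTS : ({pa, pb, pc} : Set (HalfEdge G)) = {p : HalfEdge G | p.1.1 = x} :=
        Set.eq_of_subset_of_ncard_le hsub (by rw [hScard x, hTcard]) (hSfin x)
      have hm1 : (P x).1 ∈ ({pa, pb, pc} : Set (HalfEdge G)) := by
        rw [hTS]; exact hP1 x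
      have hm2 : (P x).2 ∈ ({pa, pb, pc} : Set (HalfEdge G)) := by
        rw [hTS]; exact hP2 x
      have hFadjP : ∀ u, H.Adj (Sum.inr (false, (P u).1)) (Sum.inr (false, (P u).2)) :=
        fun u => (SimpleGraph.sup_adj _ _ _ _).mpr (Or.inr (hFP u))
      simp only [Set.mem_insert_iff, Set.mem_singleton_iff] at hm1 hm2
      rcases hm1 with h1 | h1 | h1 <;> rcases hm2 with h2 | h2 | h2 <;>
        first
          | exact hP3 x (h1.trans h2.symm)
          | exact hab (by rw [← h1, ← h2]; exact hFadjP x)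
          | exact hab (by rw [← h1, ← h2]; exact (hFadjP x).symm)
          | exact hac (by rw [← h1, ← h2]; exact hFadjP x)
          | exact hac (by rw [← h1, ← h2]; exact (hFadjP x).symm)
          | exact hbc (by rw [← h1, ← h2]; exact hFadjP x)
          | exact hbc (by rw [← h1, ← h2]; exact (hFadjP x).symm)
    · cases bz
      · -- intermediate-close vertex as centre
        by_cases h1 : p = (P p.1.1).1
        · have conv : ∀ w, H.Adj (Sum.inr (false, p)) w →
              w = Sum.inl p.1.1 ∨ w = Sum.inr (true, p) ∨
                w = Sum.inr (false, (P p.1.1).2) := by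
            intro w hw
            rcases (N3 p w).mp hw with rfl | rfl | ⟨_, rfl⟩ | ⟨h2, rfl⟩
            · exact Or.inl rfl
            · exact Or.inr (Or.inl rfl)
            · exact Or.inr (Or.inr rfl)
            · exact absurd (h1.symm.trans h2) (hP3 p.1.1)
          have h13 : H.Adj (Sum.inl p.1.1) (Sum.inr (false, (P p.1.1).2)) :=
            (SimpleGraph.sup_adj _ _ _ _).mpr (Or.inl (adj_lf.mpr (hP2 p.1.1)))
          rcases conv a hza with rfl | rfl | rfl <;>
            rcases conv b hzb with rfl | rfl | rfl <;>
            rcases conv c hzc with rfl | rfl | rfl <;>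
            first
              | exact hab' rfl
              | exact hac' rfl
              | exact hbc' rfl
              | exact hab h13
              | exact hab h13.symm
              | exact hac h13
              | exact hac h13.symm
              | exact hbc h13
              | exact hbc h13.symm
        · by_cases h2 : p = (P p.1.1).2
          · have conv : ∀ w, H.Adj (Sum.inr (false, p)) w →
                w = Sum.inl p.1.1 ∨ w = Sum.inr (true, p) ∨
                  w = Sum.inr (false, (P p.1.1).1) := by
              intro w hw
              rcases (N3 p w).mp hw with rfl | rfl | ⟨h1', rfl⟩ | ⟨_, rfl⟩
              · exact Or.inl rfl
              · exact Or.inr (Or.inl rfl)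
              · exact absurd h1' h1
              · exact Or.inr (Or.inr rfl)
            have h13 : H.Adj (Sum.inl p.1.1) (Sum.inr (false, (P p.1.1).1)) :=
              (SimpleGraph.sup_adj _ _ _ _).mpr (Or.inl (adj_lf.mpr (hP1 p.1.1)))
            rcases conv a hza with rfl | rfl | rfl <;>
              rcases conv b hzb with rfl | rfl | rfl <;>
              rcases conv c hzc with rfl | rfl | rfl <;>
              first
                | exact hab' rfl
                | exact hac' rfl
                | exact hbc' rfl
                | exact hab h13
                | exact hab h13.symm
                | exact hac h13
                | exact hac h13.symm
                | exact hbc h13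
                | exact hbc h13.symm
          · have conv : ∀ w, H.Adj (Sum.inr (false, p)) w →
                w = Sum.inl p.1.1 ∨ w = Sum.inr (true, p) := by
              intro w hw
              rcases (N3 p w).mp hw with rfl | rfl | ⟨h1', rfl⟩ | ⟨h2', rfl⟩
              · exact Or.inl rfl
              · exact Or.inr rfl
              · exact absurd h1' h1
              · exact absurd h2' h2
            rcases conv a hza with rfl | rfl <;>
              rcases conv b hzb with rfl | rfl <;>
              rcases conv c hzc with rfl | rfl <;>
              first
                | exact hab' rfl
                | exact hac' rfl
                | exact hbc' rfl
      · -- middle vertex as centre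
        rcases (N2 p a).mp hza with rfl | ⟨qa, rfl, hqa1, hqa2⟩ <;>
          rcases (N2 p b).mp hzb with rfl | ⟨qb, rfl, hqb1, hqb2⟩ <;>
          rcases (N2 p c).mp hzc with rfl | ⟨qc, rfl, hqc1, hqc2⟩ <;>
          first
            | exact hab' rfl
            | exact hac' rfl
            | exact hbc' rfl
            | exact hab' (by rw [partner_unique hqa1 hqa2 hqb1 hqb2])
            | exact hac' (by rw [partner_unique hqa1 hqa2 hqc1 hqc2])
            | exact hbc' (by rw [partner_unique hqb1 hqb2 hqc1 hqc2])
  · -- diamond-free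
    have common : ∀ a b c d, H.Adj a b → H.Adj a c → H.Adj a d →
        H.Adj b c → H.Adj b d → c = d := by
      intro a b c d hab hac had hbc hbd
      obtain x | ⟨ba, p⟩ := a
      · -- a = inl x
        obtain ⟨p, rfl, hpx⟩ := (N1 x b).mp hab
        obtain ⟨qc, rfl, hqcx⟩ := (N1 x c).mp hac
        obtain ⟨qd, rfl, hqdx⟩ := (N1 x d).mp had
        rcases (N3 p _).mp hbc with h | h | ⟨hh1, h⟩ | ⟨hh1, h⟩
        · exact absurd h (by simp)
        · exact absurd h (by simp)
        all_goals
          rcases (N3 p _).mp hbd with h' | h' | ⟨hh2, h'⟩ | ⟨hh2, h'⟩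
        · exact absurd h' (by simp)
        · exact absurd h' (by simp)
        · rw [h, h']
        · exact absurd (hh1.symm.trans hh2) (hP3 p.1.1)
        · exact absurd h' (by simp)
        · exact absurd h' (by simp)
        · exact absurd (hh2.symm.trans hh1) (hP3 p.1.1)
        · rw [h, h']
      · cases ba
        · -- a = inr (false, p)
          rcases (N3 p b).mp hab with rfl | rfl | ⟨hh1, rfl⟩ | ⟨hh1, rfl⟩
          · -- b = inl p.1.1 : common neighbours of (false p, inl u)
            obtain ⟨qc, rfl, hqcx⟩ := (N1 _ c).mp hbc
            obtain ⟨qd, rfl, hqdx⟩ := (N1 _ d).mp hbd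
            rcases (N3 p _).mp hac with h | h | ⟨hc1, h⟩ | ⟨hc1, h⟩
            · exact absurd h (by simp)
            · exact absurd h (by simp)
            all_goals
              rcases (N3 p _).mp had with h' | h' | ⟨hd1, h'⟩ | ⟨hd1, h'⟩
            · exact absurd h' (by simp)
            · exact absurd h' (by simp)
            · rw [h, h']
            · exact absurd (hc1.symm.trans hd1) (hP3 p.1.1)
            · exact absurd h' (by simp)
            · exact absurd h' (by simp)
            · exact absurd (hd1.symm.trans hc1) (hP3 p.1.1)
            · rw [h, h']
          · -- b = inr (true, p) : no common neighbour
            exfalso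
            rcases (N3 p c).mp hac with rfl | rfl | ⟨hc1, rfl⟩ | ⟨hc1, rfl⟩
            · rcases (N2 p _).mp hbc with h | ⟨r, h, _, _⟩ <;> exact absurd h (by simp)
            · rcases (N2 p _).mp hbc with h | ⟨r, h, hr1, hr2⟩
              · exact absurd h (by simp)
              · have : p = r := by simpa using h
                exact hr2 (by rw [← this])
            · rcases (N2 p _).mp hbc with h | ⟨r, h, _, _⟩
              · have : (P p.1.1).2 = p := by simpa using h
                exact hP3 p.1.1 (hc1.symm.trans this.symm)
              · exact absurd h (by simp)
            · rcases (N2 p _).mp hbc with h | ⟨r, h, _, _⟩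
              · have : (P p.1.1).1 = p := by simpa using h
                exact hP3 p.1.1 (this.trans hc1)
              · exact absurd h (by simp)
          · -- b = inr (false, (P u).2), p = (P u).1
            have hb2 : (P p.1.1).2.1.1 = p.1.1 := hP2 p.1.1
            have hcopt : ∀ w, H.Adj (Sum.inr (false, p)) w →
                H.Adj (Sum.inr (false, (P p.1.1).2)) w → w = Sum.inl p.1.1 := by
              intro w hw1 hw2
              have hw2' := (N3 _ w).mp hw2
              rw [hb2] at hw2'
              rcases (N3 p w).mp hw1 with rfl | rfl | ⟨_, rfl⟩ | ⟨hc1, rfl⟩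
              · rfl
              · rcases hw2' with h | h | ⟨h0, h⟩ | ⟨h0, h⟩
                · exact absurd h (by simp)
                · have : p = (P p.1.1).2 := by simpa using h
                  exact absurd (hh1.symm.trans this) (hP3 p.1.1)
                · exact absurd h (by simp)
                · exact absurd h (by simp)
              · rcases hw2' with h | h | ⟨h0, h⟩ | ⟨h0, h⟩
                · exact absurd h (by simp)
                · exact absurd h (by simp)
                · exact (hP3 p.1.1 (by first | exact h0 | exact h0.symm)).elim
                · have : (P p.1.1).2 = (P p.1.1).1 := by simpa using h
                  exact absurd this.symm (hP3 p.1.1)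
              · exact absurd (hh1.symm.trans hc1) (hP3 p.1.1)
            rw [hcopt c hac hbc, hcopt d had hbd]
          · -- b = inr (false, (P u).1), p = (P u).2
            have hb2 : (P p.1.1).1.1.1 = p.1.1 := hP1 p.1.1
            have hcopt : ∀ w, H.Adj (Sum.inr (false, p)) w →
                H.Adj (Sum.inr (false, (P p.1.1).1)) w → w = Sum.inl p.1.1 := by
              intro w hw1 hw2
              have hw2' := (N3 _ w).mp hw2
              rw [hb2] at hw2'
              rcases (N3 p w).mp hw1 with rfl | rfl | ⟨hc1, rfl⟩ | ⟨_, rfl⟩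
              · rfl
              · rcases hw2' with h | h | ⟨h0, h⟩ | ⟨h0, h⟩
                · exact absurd h (by simp)
                · have : p = (P p.1.1).1 := by simpa using h
                  exact absurd (this.symm.trans hh1) (hP3 p.1.1)
                · exact absurd h (by simp)
                · exact absurd h (by simp)
              · exact absurd (hc1.symm.trans hh1) (hP3 p.1.1)
              · rcases hw2' with h | h | ⟨h0, h⟩ | ⟨h0, h⟩
                · exact absurd h (by simp)
                · exact absurd h (by simp)
                · have : (P p.1.1).1 = (P p.1.1).2 := by simpa using h
                  exact absurd this (hP3 p.1.1)
                · exact (hP3 p.1.1 (by first | exact h0 | exact h0.symm)).elim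
            rw [hcopt c hac hbc, hcopt d had hbd]
        · -- a = inr (true, p)
          rcases (N2 p b).mp hab with rfl | ⟨qb, rfl, hqb1, hqb2⟩
          · -- b = inr (false, p)
            exfalso
            rcases (N2 p c).mp hac with rfl | ⟨qc, rfl, hqc1, hqc2⟩
            · rcases (N3 p _).mp hbc with h | h | ⟨h0, h⟩ | ⟨h0, h⟩
              · exact absurd h (by simp)
              · exact absurd h (by simp)
              · have : p = (P p.1.1).2 := by simpa using h
                exact absurd (h0.symm.trans this) (hP3 p.1.1)
              · have : p = (P p.1.1).1 := by simpa using h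
                exact absurd (this.symm.trans h0) (hP3 p.1.1)
            · rcases (N3 p _).mp hbc with h | h | ⟨h0, h⟩ | ⟨h0, h⟩
              · exact absurd h (by simp)
              · have : qc = p := by simpa using h
                exact hqc2 (by rw [this])
              · exact absurd h (by simp)
              · exact absurd h (by simp)
          · -- b = inr (true, qb)
            exfalso
            rcases (N2 p c).mp hac with rfl | ⟨qc, rfl, hqc1, hqc2⟩
            · rcases (N2 qb _).mp hbc with h | ⟨r, h, _, _⟩
              · have : p = qb := by simpa using h
                exact hqb2 (by rw [← this])
              · exact absurd h (by simp)
            · rcases (N2 qb _).mp hbc with h | ⟨r, h, hr1, hr2⟩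
              · exact absurd h (by simp)
              · have hqcr : qc = r := by simpa using h
                have : qc = qb := partner_unique hqc1 hqc2 hqb1 hqb2
                subst hqcr
                exact (hbc.ne) (by rw [this])
    rintro ⟨a, b, c, d, hab, hac, had, hbc, hbd, hcd, hcd'⟩
    exact hcd' (common a b c d hab hac had hbc hbd)
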